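/- Let A = (A_j)_{j≥1} be a partition of ℝ^d into cubes of side length s ∈ (0,1], X := [-1,1]^d, P a probability measure on X × {-1,1} with fixed posterior version η, and r ≥ s/2. If P has MNE β ∈ (0,∞] with constant c_MNE, then the approximation error of the infinite-sample histogram rule on N_r is bounded by R_{L_{N_r},P}(h_{P,s}) − R*_{L_{N_r},P} ≤ (c_MNE s)^β. -/

import Mathlib

open MeasureTheory Set Metric
open scoped Classical ENNReal NNReal

noncomputable section

namespace RefinedMargin

abbrev Pt (d : ℕ) := Fin d → ℝ

/-- The input space `X = [-1,1]^d` (with the supremum norm coming from `Fin d → ℝ`). -/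
def cubeX (d : ℕ) : Set (Pt d) := Set.Icc (fun _ => (-1 : ℝ)) (fun _ => (1 : ℝ))

variable {d : ℕ} {s : ℝ}

/-- `X_1 = {x ∈ X : η x > 1/2}`. -/
def X1 (η : Pt d → ℝ) : Set (Pt d) := {x | x ∈ cubeX d ∧ 1 / 2 < η x}

/-- `X_{-1} = {x ∈ X : η x < 1/2}`. -/
def Xm1 (η : Pt d → ℝ) : Set (Pt d) := {x | x ∈ cubeX d ∧ η x < 1 / 2}

/-- `X_0 = {x ∈ X : η x = 1/2}`. -/
def X0 (η : Pt d → ℝ) : Set (Pt d) := {x | x ∈ cubeX d ∧ η x = 1 / 2}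

/-- Distance to the decision boundary. -/
def Δ (η : Pt d → ℝ) (x : Pt d) : ℝ :=
  if x ∈ Xm1 η then Metric.infDist x (X1 η)
  else if x ∈ X1 η then Metric.infDist x (Xm1 η)
  else 0

/-- Relative boundary of `T` in `X`. -/
def relBoundary (X T : Set (Pt d)) : Set (Pt d) := closure T ∩ closure (X \ T) ∩ X

/-- `T` is `m`-rectifiable: the image of a bounded subset of `ℝ^m` under a Lipschitz map. -/
def IsRectifiable (m : ℕ) (T : Set (Pt d)) : Prop :=
  ∃ (B : Set (Fin m → ℝ)) (g : (Fin m → ℝ) → Pt d) (K : NNReal),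
    Bornology.IsBounded B ∧ LipschitzOnWith K g B ∧ g '' B = T

/-- Margin exponent `α` with constant `cME`. -/
def HasME (μ : Measure (Pt d)) (η : Pt d → ℝ) (α cME : ℝ) : Prop :=
  ∀ t : ℝ, 0 < t → μ {x | Δ η x < t} ≤ ENNReal.ofReal ((cME * t) ^ α)

/-- Margin-noise exponent `β` with constant `cMNE`. -/
def HasMNE (μ : Measure (Pt d)) (η : Pt d → ℝ) (β cMNE : ℝ) : Prop :=
  ∀ t : ℝ, 0 < t → (∫ x in {x | Δ η x < t}, |2 * η x - 1| ∂μ) ≤ (cMNE * t) ^ β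

/-- The distance to the decision boundary controls the noise from below with
exponent `γ` and constant `cLC`. -/
def LowerControl (μ : Measure (Pt d)) (η : Pt d → ℝ) (γ cLC : ℝ) : Prop :=
  ∀ᵐ x ∂μ, Δ η x ^ γ ≤ cLC * |2 * η x - 1|

/-- A partition of `ℝ^d` into (half-open) cubes of side length `s`. -/
structure CubePartition (d : ℕ) (s : ℝ) where
  cell : ℕ → Set (Pt d)
  isCube : ∀ j, ∃ a : Pt d, cell j = {x | ∀ i, a i ≤ x i ∧ x i < a i + s}
  covers : ∀ x : Pt d, ∃! j, x ∈ cell j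

namespace CubePartition

/-- Index of the unique cell containing `x`. -/
def idx (𝒜 : CubePartition d s) (x : Pt d) : ℕ := (𝒜.covers x).choose

/-- The unique cell `A(x)` containing `x`. -/
def cellOf (𝒜 : CubePartition d s) (x : Pt d) : Set (Pt d) := 𝒜.cell (𝒜.idx x)

/-- Indices of cells intersecting `X`. -/
def J (𝒜 : CubePartition d s) : Set ℕ := {j | (𝒜.cell j ∩ cubeX d).Nonempty}

/-- Indices of cells near the decision boundary. -/
def JN (𝒜 : CubePartition d s) (η : Pt d → ℝ) (r : ℝ) : Set ℕ :=
  {j | j ∈ 𝒜.J ∧ ∀ x ∈ 𝒜.cell j ∩ cubeX d, Δ η x ≤ 3 * r}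

/-- Indices of cells far from the decision boundary. -/
def JF (𝒜 : CubePartition d s) (η : Pt d → ℝ) (r : ℝ) : Set ℕ :=
  {j | j ∈ 𝒜.J ∧ ∀ x ∈ 𝒜.cell j ∩ cubeX d, r ≤ Δ η x}

/-- `N_r`, the union of the cells near the decision boundary. -/
def Nr (𝒜 : CubePartition d s) (η : Pt d → ℝ) (r : ℝ) : Set (Pt d) := ⋃ j ∈ 𝒜.JN η r, 𝒜.cell j

/-- `F_r`, the union of the cells far from the decision boundary. -/
def Fr (𝒜 : CubePartition d s) (η : Pt d → ℝ) (r : ℝ) : Set (Pt d) := ⋃ j ∈ 𝒜.JF η r, 𝒜.cell j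

end CubePartition

/-- `sign` with the convention `sign 0 = 1`. -/
def sgn (t : ℝ) : ℝ := if 0 ≤ t then 1 else -1

/-- The classification loss `L(y,t) = 1_{(-∞,0]}(y · sign t)`. -/
def cLoss (y t : ℝ) : ℝ := if y * sgn t ≤ 0 then 1 else 0

/-- The restricted classification loss `L_T(x,y,t) = 1_T(x) L(y,t)`. -/
def rLoss (T : Set (Pt d)) (x : Pt d) (y t : ℝ) : ℝ := if x ∈ T then cLoss y t else 0

/-- The joint distribution `P` on `X × {-1,1} ⊆ ℝ^d × ℝ` built from the marginal `μ = P_X`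
and the posterior probability `η`. -/
def joint (μ : Measure (Pt d)) (η : Pt d → ℝ) : Measure (Pt d × ℝ) :=
  μ.bind fun x =>
    ENNReal.ofReal (η x) • Measure.dirac (x, 1) + ENNReal.ofReal (1 - η x) • Measure.dirac (x, -1)

/-- The risk `R_{L_T,P}(f)`. -/
def risk (P : Measure (Pt d × ℝ)) (T : Set (Pt d)) (f : Pt d → ℝ) : ℝ :=
  ∫ z, rLoss T z.1 z.2 (f z.1) ∂P

/-- The Bayes risk `R*_{L_T,P}`, the infimum over all measurable functions. -/
def bayesRisk (P : Measure (Pt d × ℝ)) (T : Set (Pt d)) : ℝ :=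
  ⨅ f : { f : Pt d → ℝ // Measurable f }, risk P T f.1

/-- The Bayes decision function `sign (2η - 1)`. -/
def bayesF (η : Pt d → ℝ) (x : Pt d) : ℝ := sgn (2 * η x - 1)

/-- The empirical risk of `f` on the dataset `D` for the restricted loss `L_T`. -/
def empRisk {n : ℕ} (D : Fin n → Pt d × ℝ) (T : Set (Pt d)) (f : Pt d → ℝ) : ℝ :=
  (∑ i, rLoss T (D i).1 (D i).2 (f (D i).1)) / (n : ℝ)

/-- `f_{D,s}`. -/
def fHat (𝒜 : CubePartition d s) {n : ℕ} (D : Fin n → Pt d × ℝ) (x : Pt d) : ℝ :=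
  ((∑ i, if (D i).2 = 1 ∧ (D i).1 ∈ 𝒜.cellOf x then (1 : ℝ) else 0) -
      ∑ i, if (D i).2 = -1 ∧ (D i).1 ∈ 𝒜.cellOf x then (1 : ℝ) else 0) / (n : ℝ)

/-- The empirical histogram rule `h_{D,s} = sign f_{D,s}`. -/
def histRule (𝒜 : CubePartition d s) {n : ℕ} (D : Fin n → Pt d × ℝ) (x : Pt d) : ℝ :=
  sgn (fHat 𝒜 D x)

/-- `f_{P,s}`. -/
def fBar (𝒜 : CubePartition d s) (P : Measure (Pt d × ℝ)) (x : Pt d) : ℝ :=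
  (P (𝒜.cellOf x ×ˢ ({1} : Set ℝ))).toReal - (P (𝒜.cellOf x ×ˢ ({-1} : Set ℝ))).toReal

/-- The infinite-sample histogram rule `h_{P,s} = sign f_{P,s}`. -/
def histRuleP (𝒜 : CubePartition d s) (P : Measure (Pt d × ℝ)) (x : Pt d) : ℝ :=
  sgn (fBar 𝒜 P x)

/-- The class `𝓕` of `±1`-valued functions which are constant on the cells meeting `X`
(and `0` elsewhere). -/
def histClass (𝒜 : CubePartition d s) : Set (Pt d → ℝ) :=
  {f | ∃ c : ℕ → ℝ, (∀ j, c j = 1 ∨ c j = -1) ∧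
    ∀ x, f x = if 𝒜.idx x ∈ 𝒜.J then c (𝒜.idx x) else 0}

/-- The `n`-fold product measure `P^n`. -/
def Pn (μ : Measure (Pt d)) (η : Pt d → ℝ) (n : ℕ) : Measure (Fin n → Pt d × ℝ) :=
  Measure.pi fun _ => joint μ η


/-!
The Bayes risk on a set `T` is at least `∫_T min(η, 1 - η) dP_X`, so the excess risk of `h_{P,s}`
is at most the integral over `T` of its excess inner risk, which is `|2η - 1|` where `h_{P,s}`
disagrees with the sign of `2η - 1` and `0` elsewhere. On each cell `A`,
`f_{P,s} = ∫_A (2η - 1) dP_X`; at a disagreement point `x` this has the sign opposite to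
`2η(x) - 1`, so, off a `P_X`-null set, the cell of `x` has a subset of positive `P_X`-measure, hence
a point of `X`, on the other side of the decision boundary. That point is at sup-distance `< s`
from `x`, so `Δ_η(x) < s`, and the margin-noise bound at `t = s` finishes the proof.
-/

lemma measure_inter_neg_ne_zero_of_setIntegral_neg {α : Type*} [MeasurableSpace α]
    {μ : Measure α} {g : α → ℝ} {A : Set α} (hA : MeasurableSet A)
    (h : ∫ x in A, g x ∂μ < 0) : μ (A ∩ {x | g x < 0}) ≠ 0 := by
  intro h0
  refine h.not_ge (setIntegral_nonneg_ae hA ?_)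
  filter_upwards [measure_eq_zero_iff_ae_notMem.1 h0] with x hx hxA
  exact not_lt.1 fun hgx => hx ⟨hxA, hgx⟩

lemma measure_inter_pos_ne_zero_of_setIntegral_nonneg {α : Type*} [MeasurableSpace α]
    {μ : Measure α} {g : α → ℝ} {A : Set α} (hA : MeasurableSet A) (hg : IntegrableOn g A μ)
    (h : 0 ≤ ∫ x in A, g x ∂μ) (hneg : μ (A ∩ {x | g x < 0}) ≠ 0) :
    μ (A ∩ {x | 0 < g x}) ≠ 0 := by
  intro h0
  have hnonpos : ∀ᵐ x ∂μ.restrict A, 0 ≤ -g x := by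
    rw [ae_restrict_iff' hA]
    filter_upwards [measure_eq_zero_iff_ae_notMem.1 h0] with x hx hxA
    exact neg_nonneg.2 (not_lt.1 fun hgx => hx ⟨hxA, hgx⟩)
  have hzero : ∫ x in A, -g x ∂μ = 0 :=
    le_antisymm (by rw [integral_neg]; linarith) (integral_nonneg_of_ae hnonpos)
  have hg0 := (setIntegral_eq_zero_iff_of_nonneg_ae hnonpos hg.neg).1 hzero
  refine hneg ?_
  rw [inter_comm, ← Measure.restrict_apply' hA, measure_eq_zero_iff_ae_notMem]
  filter_upwards [hg0] with x hx hlt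
  exact hlt.ne (neg_eq_zero.1 hx)

namespace CubePartition

variable (𝒜 : CubePartition d s)

lemma mem_cellOf (x : Pt d) : x ∈ 𝒜.cellOf x := (𝒜.covers x).choose_spec.1

lemma idx_eq_of_mem {x : Pt d} {j : ℕ} (hx : x ∈ 𝒜.cell j) : 𝒜.idx x = j :=
  ((𝒜.covers x).choose_spec.2 j hx).symm

lemma measurableSet_cell (j : ℕ) : MeasurableSet (𝒜.cell j) := by
  obtain ⟨a, ha⟩ := 𝒜.isCube j
  rw [ha, ofPred_forall]
  exact MeasurableSet.iInter fun i =>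
    (measurableSet_le measurable_const (measurable_pi_apply i)).inter
      (measurableSet_lt (measurable_pi_apply i) measurable_const)

lemma measurableSet_cellOf (x : Pt d) : MeasurableSet (𝒜.cellOf x) := 𝒜.measurableSet_cell _

lemma measurable_idx : Measurable 𝒜.idx := by
  refine measurable_to_countable' fun j => ?_
  have : 𝒜.idx ⁻¹' {j} = 𝒜.cell j := by
    ext x
    exact ⟨fun h => (mem_singleton_iff.1 h) ▸ 𝒜.mem_cellOf x, 𝒜.idx_eq_of_mem⟩
  exact this ▸ 𝒜.measurableSet_cell j

lemma measurableSet_Nr (η : Pt d → ℝ) (r : ℝ) : MeasurableSet (𝒜.Nr η r) :=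
  .biUnion (to_countable _) fun j _ => 𝒜.measurableSet_cell j

lemma dist_lt_of_mem_cellOf (hs : 0 < s) {x y : Pt d} (hy : y ∈ 𝒜.cellOf x) : dist x y < s := by
  have hx := 𝒜.mem_cellOf x
  obtain ⟨a, ha⟩ := 𝒜.isCube (𝒜.idx x)
  rw [cellOf, ha] at hx hy
  refine (dist_pi_lt_iff hs).2 fun i => ?_
  rw [Real.dist_eq, abs_sub_lt_iff]
  constructor <;> linarith [hx i, hy i]

lemma ae_measure_cellOf_inter_ne_zero (μ : Measure (Pt d)) (S : Set (Pt d)) :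
    ∀ᵐ x ∂μ, x ∈ S → μ (𝒜.cellOf x ∩ S) ≠ 0 := by
  rw [ae_iff]
  refine measure_mono_null (t := ⋃ j, {x | x ∈ 𝒜.cell j ∩ S ∧ μ (𝒜.cell j ∩ S) = 0})
    (fun x hx => ?_) (measure_iUnion_null fun j => ?_)
  · obtain ⟨hxS, hx0⟩ := Classical.not_imp.1 hx
    exact mem_iUnion.2 ⟨𝒜.idx x, ⟨𝒜.mem_cellOf x, hxS⟩, not_not.1 hx0⟩
  · by_cases h : μ (𝒜.cell j ∩ S) = 0
    · exact measure_mono_null (fun x hx => hx.1) h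
    · simp [h]

lemma exists_mem_cubeX_dist_lt (hs : 0 < s) {μ : Measure (Pt d)} (hμX : μ (cubeX d)ᶜ = 0)
    {x : Pt d} {S : Set (Pt d)} (h : μ (𝒜.cellOf x ∩ S) ≠ 0) :
    ∃ y ∈ S ∩ cubeX d, dist x y < s := by
  rw [← measure_inter_conull hμX] at h
  obtain ⟨y, ⟨hyA, hyS⟩, hyX⟩ := nonempty_of_measure_ne_zero h
  exact ⟨y, ⟨hyS, hyX⟩, 𝒜.dist_lt_of_mem_cellOf hs hyA⟩

lemma measurable_fBar (P : Measure (Pt d × ℝ)) : Measurable (fBar 𝒜 P) :=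
  (measurable_from_top : Measurable fun j : ℕ =>
    (P (𝒜.cell j ×ˢ {1})).toReal - (P (𝒜.cell j ×ˢ {-1})).toReal).comp 𝒜.measurable_idx

end CubePartition

section Boundary

variable {η : Pt d → ℝ} {x y : Pt d}

lemma measurable_Δ (hη : Measurable η) : Measurable (Δ η) := by
  have hX : MeasurableSet (cubeX d) := measurableSet_Icc
  exact Measurable.ite (hX.inter (measurableSet_lt hη measurable_const))
    (continuous_infDist_pt _).measurable
    (Measurable.ite (hX.inter (measurableSet_lt measurable_const hη))
      (continuous_infDist_pt _).measurable measurable_const)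

lemma Δ_le_dist_of_mem_X1 (hx : x ∈ X1 η) (hy : y ∈ Xm1 η) : Δ η x ≤ dist x y := by
  have hx' : x ∉ Xm1 η := fun h => lt_asymm hx.2 h.2
  rw [Δ, if_neg hx', if_pos hx]
  exact infDist_le_dist_of_mem hy

lemma Δ_le_dist_of_mem_Xm1 (hx : x ∈ Xm1 η) (hy : y ∈ X1 η) : Δ η x ≤ dist x y := by
  rw [Δ, if_pos hx]
  exact infDist_le_dist_of_mem hy

end Boundary

section InnerRisk

lemma measurable_sgn : Measurable sgn :=
  Measurable.ite (measurableSet_le measurable_const measurable_id) measurable_const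
    measurable_const

/-- `e L(1, t) + (1 - e) L(-1, t)`: the expected classification loss of the prediction `t` at a
point with posterior probability `e`. -/
def innerRisk (e t : ℝ) : ℝ := if 0 ≤ t then 1 - e else e

lemma innerRisk_sgn (e t : ℝ) : innerRisk e (sgn t) = innerRisk e t := by
  unfold innerRisk sgn
  split_ifs <;> first | rfl | linarith

lemma min_le_innerRisk (e t : ℝ) : min e (1 - e) ≤ innerRisk e t := by
  unfold innerRisk
  split_ifs
  exacts [min_le_right _ _, min_le_left _ _]

lemma innerRisk_sub_min_le (e t : ℝ) : innerRisk e t - min e (1 - e) ≤ |2 * e - 1| := by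
  unfold innerRisk
  rcases min_choice e (1 - e) with h | h <;> rw [h] <;> split_ifs <;>
    linarith [le_abs_self (2 * e - 1), neg_abs_le (2 * e - 1)]

lemma innerRisk_eq_min {e t : ℝ} (hneg : t < 0 → e ≤ 1 / 2) (hnonneg : 0 ≤ t → 1 / 2 ≤ e) :
    innerRisk e t = min e (1 - e) := by
  unfold innerRisk
  split_ifs with ht
  · exact (min_eq_right (by linarith [hnonneg ht])).symm
  · exact (min_eq_left (by linarith [hneg (not_le.1 ht)])).symm

lemma innerRisk_mem_Icc {e : ℝ} (he : e ∈ Icc (0 : ℝ) 1) (t : ℝ) :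
    innerRisk e t ∈ Icc (0 : ℝ) 1 := by
  unfold innerRisk
  split_ifs <;> constructor <;> linarith [he.1, he.2]

variable {μ : Measure (Pt d)} {η : Pt d → ℝ}

lemma measurable_innerRisk (hη : Measurable η) {f : Pt d → ℝ} (hf : Measurable f) :
    Measurable fun x => innerRisk (η x) (f x) :=
  Measurable.ite (measurableSet_le measurable_const hf) (measurable_const.sub hη) hη

variable [IsFiniteMeasure μ]

lemma integrable_innerRisk (hη01 : ∀ x, η x ∈ Icc (0 : ℝ) 1) (hη : Measurable η)
    {f : Pt d → ℝ} (hf : Measurable f) : Integrable (fun x => innerRisk (η x) (f x)) μ :=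
  .of_mem_Icc 0 1 (measurable_innerRisk hη hf).aemeasurable
    (ae_of_all _ fun x => innerRisk_mem_Icc (hη01 x) _)

lemma integrable_min_one_sub (hη01 : ∀ x, η x ∈ Icc (0 : ℝ) 1) (hη : Measurable η) :
    Integrable (fun x => min (η x) (1 - η x)) μ :=
  .of_mem_Icc 0 1 (hη.min (measurable_const.sub hη)).aemeasurable (ae_of_all _ fun x =>
    ⟨le_min (hη01 x).1 (by linarith [(hη01 x).2]), (min_le_left _ _).trans (hη01 x).2⟩)

end InnerRisk

section Joint

variable {μ : Measure (Pt d)} {η : Pt d → ℝ}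

def fiberMeasure (η : Pt d → ℝ) (x : Pt d) : Measure (Pt d × ℝ) :=
  ENNReal.ofReal (η x) • Measure.dirac (x, 1) + ENNReal.ofReal (1 - η x) • Measure.dirac (x, -1)

lemma joint_eq_bind (μ : Measure (Pt d)) (η : Pt d → ℝ) : joint μ η = μ.bind (fiberMeasure η) :=
  rfl

lemma measurable_fiberMeasure (hη : Measurable η) : Measurable (fiberMeasure η) := by
  refine Measure.measurable_of_measurable_coe _ fun u hu => ?_
  simp only [fiberMeasure, Measure.coe_add, Measure.coe_smul, Pi.add_apply, Pi.smul_apply,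
    smul_eq_mul, Measure.dirac_apply' _ hu]
  have hind (y : ℝ) : Measurable fun x : Pt d => u.indicator (1 : Pt d × ℝ → ℝ≥0∞) (x, y) :=
    (measurable_one.indicator hu).comp (measurable_id.prodMk measurable_const)
  fun_prop

lemma lintegral_joint (hη : Measurable η) {g : Pt d × ℝ → ℝ≥0∞} (hg : Measurable g) :
    ∫⁻ z, g z ∂joint μ η =
      ∫⁻ x, (ENNReal.ofReal (η x) * g (x, 1) + ENNReal.ofReal (1 - η x) * g (x, -1)) ∂μ := by
  rw [joint_eq_bind, Measure.lintegral_bind (measurable_fiberMeasure hη).aemeasurable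
    hg.aemeasurable]
  refine lintegral_congr fun x => ?_
  rw [fiberMeasure, lintegral_add_measure, lintegral_smul_measure, lintegral_smul_measure,
    lintegral_dirac' _ hg, lintegral_dirac' _ hg, smul_eq_mul, smul_eq_mul]

lemma joint_prod_one (hη : Measurable η) {A : Set (Pt d)} (hA : MeasurableSet A) :
    joint μ η (A ×ˢ {1}) = ∫⁻ x in A, ENNReal.ofReal (η x) ∂μ := by
  have hA1 := hA.prod (measurableSet_singleton (1 : ℝ))
  rw [← lintegral_indicator_one hA1, lintegral_joint hη (measurable_one.indicator hA1),
    ← lintegral_indicator hA]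
  refine lintegral_congr fun x => ?_
  by_cases hx : x ∈ A <;> norm_num [hx, indicator]

lemma joint_prod_neg_one (hη : Measurable η) {A : Set (Pt d)} (hA : MeasurableSet A) :
    joint μ η (A ×ˢ {-1}) = ∫⁻ x in A, ENNReal.ofReal (1 - η x) ∂μ := by
  have hA1 := hA.prod (measurableSet_singleton (-1 : ℝ))
  rw [← lintegral_indicator_one hA1, lintegral_joint hη (measurable_one.indicator hA1),
    ← lintegral_indicator hA]
  refine lintegral_congr fun x => ?_
  by_cases hx : x ∈ A <;> norm_num [hx, indicator]


variable (hη01 : ∀ x, η x ∈ Icc (0 : ℝ) 1) (hη : Measurable η)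
include hη01 hη

lemma fBar_joint [IsFiniteMeasure μ] (𝒜 : CubePartition d s) (x : Pt d) :
    fBar 𝒜 (joint μ η) x = ∫ y in 𝒜.cellOf x, (2 * η y - 1) ∂μ := by
  have hA := 𝒜.measurableSet_cellOf x
  have hint : Integrable η μ := .of_mem_Icc 0 1 hη.aemeasurable (ae_of_all _ hη01)
  have hint' : Integrable (fun y => 1 - η y) μ := (integrable_const 1).sub hint
  rw [fBar, joint_prod_one hη hA, joint_prod_neg_one hη hA,
    ← integral_eq_lintegral_of_nonneg_ae (ae_of_all _ fun y => (hη01 y).1) hη.aestronglyMeasurable,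
    ← integral_eq_lintegral_of_nonneg_ae (ae_of_all _ fun y => sub_nonneg.2 (hη01 y).2)
      (measurable_const.sub hη).aestronglyMeasurable,
    ← integral_sub hint.integrableOn hint'.integrableOn]
  congr 1
  ext y
  ring

lemma risk_joint {T : Set (Pt d)} (hT : MeasurableSet T) {f : Pt d → ℝ} (hf : Measurable f) :
    risk (joint μ η) T f = ∫ x in T, innerRisk (η x) (f x) ∂μ := by
  have hloss : Measurable fun z : Pt d × ℝ => rLoss T z.1 z.2 (f z.1) :=
    Measurable.ite (hT.preimage measurable_fst)
      (Measurable.ite (measurableSet_le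
          (measurable_snd.mul ((measurable_sgn.comp hf).comp measurable_fst)) measurable_const)
        measurable_const measurable_const)
      measurable_const
  have hpoint (x : Pt d) :
      ENNReal.ofReal (η x) * ENNReal.ofReal (rLoss T x 1 (f x)) +
          ENNReal.ofReal (1 - η x) * ENNReal.ofReal (rLoss T x (-1) (f x)) =
        T.indicator (fun x => ENNReal.ofReal (innerRisk (η x) (f x))) x := by
    by_cases hx : x ∈ T <;> by_cases hfx : 0 ≤ f x <;>
      norm_num [hx, hfx, rLoss, cLoss, sgn, innerRisk]
  have hloss_nonneg (z : Pt d × ℝ) : 0 ≤ rLoss T z.1 z.2 (f z.1) := by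
    unfold rLoss cLoss
    split_ifs <;> norm_num
  rw [risk, integral_eq_lintegral_of_nonneg_ae (ae_of_all _ hloss_nonneg)
      hloss.aestronglyMeasurable, lintegral_joint hη hloss.ennreal_ofReal,
    lintegral_congr hpoint, lintegral_indicator hT,
    integral_eq_lintegral_of_nonneg_ae (ae_of_all _ fun x => (innerRisk_mem_Icc (hη01 x) _).1)
      (measurable_innerRisk hη hf).aestronglyMeasurable]


variable [IsFiniteMeasure μ] {T : Set (Pt d)} (hT : MeasurableSet T)
include hT

lemma setIntegral_min_le_bayesRisk :
    ∫ x in T, min (η x) (1 - η x) ∂μ ≤ bayesRisk (joint μ η) T := by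
  have : Nonempty {f : Pt d → ℝ // Measurable f} := ⟨⟨0, measurable_const⟩⟩
  refine le_ciInf fun f => ?_
  rw [risk_joint hη01 hη hT f.2]
  exact setIntegral_mono (integrable_min_one_sub hη01 hη).integrableOn
    (integrable_innerRisk hη01 hη f.2).integrableOn fun x => min_le_innerRisk _ _

lemma risk_sub_bayesRisk_le {f : Pt d → ℝ} (hf : Measurable f) :
    risk (joint μ η) T f - bayesRisk (joint μ η) T ≤
      ∫ x in T, (innerRisk (η x) (f x) - min (η x) (1 - η x)) ∂μ := by
  rw [integral_sub (integrable_innerRisk hη01 hη hf).integrableOn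
    (integrable_min_one_sub hη01 hη).integrableOn, risk_joint hη01 hη hT hf]
  exact sub_le_sub_left (setIntegral_min_le_bayesRisk hη01 hη hT) _

end Joint

section HistogramRule

variable {μ : Measure (Pt d)} [IsFiniteMeasure μ] (hs : 0 < s) (hμX : μ (cubeX d)ᶜ = 0)
  {η : Pt d → ℝ} (hη01 : ∀ x, η x ∈ Icc (0 : ℝ) 1) (hη : Measurable η) (𝒜 : CubePartition d s)
include hs hμX hη01 hη

lemma ae_innerRisk_fBar_eq_min :
    ∀ᵐ x ∂μ, s ≤ Δ η x → innerRisk (η x) (fBar 𝒜 (joint μ η) x) = min (η x) (1 - η x) := by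
  have hX : ∀ᵐ x ∂μ, x ∈ cubeX d := ae_iff.2 hμX
  filter_upwards [hX, 𝒜.ae_measure_cellOf_inter_ne_zero μ {y | 2 * η y - 1 < 0}]
    with x hxX hxneg hΔ
  have hA := 𝒜.measurableSet_cellOf x
  rw [fBar_joint hη01 hη]
  refine innerRisk_eq_min (fun hf => ?_) (fun hf => ?_)
  · by_contra! hηx
    obtain ⟨y, ⟨hy, hyX⟩, hxy⟩ := 𝒜.exists_mem_cubeX_dist_lt hs hμX
      (measure_inter_neg_ne_zero_of_setIntegral_neg hA hf)
    have hy' : η y < 1 / 2 := by linarith [show 2 * η y - 1 < 0 from hy]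
    exact hΔ.not_gt ((Δ_le_dist_of_mem_X1 ⟨hxX, hηx⟩ ⟨hyX, hy'⟩).trans_lt hxy)
  · by_contra! hηx
    have hint : IntegrableOn (fun y => 2 * η y - 1) (𝒜.cellOf x) μ :=
      (Integrable.of_mem_Icc (-1) 1 (by fun_prop) (ae_of_all _ fun y =>
        ⟨by linarith [(hη01 y).1], by linarith [(hη01 y).2]⟩)).integrableOn
    obtain ⟨y, ⟨hy, hyX⟩, hxy⟩ := 𝒜.exists_mem_cubeX_dist_lt hs hμX
      (measure_inter_pos_ne_zero_of_setIntegral_nonneg hA hint hf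
        (hxneg (show 2 * η x - 1 < 0 by linarith)))
    have hy' : 1 / 2 < η y := by linarith [show 0 < 2 * η y - 1 from hy]
    exact hΔ.not_gt ((Δ_le_dist_of_mem_Xm1 ⟨hxX, hηx⟩ ⟨hyX, hy'⟩).trans_lt hxy)

lemma setIntegral_excess_histRuleP_le {T : Set (Pt d)} (hT : MeasurableSet T) :
    ∫ x in T, (innerRisk (η x) (histRuleP 𝒜 (joint μ η) x) - min (η x) (1 - η x)) ∂μ ≤
      ∫ x in {x | Δ η x < s}, |2 * η x - 1| ∂μ := by
  set B := {x | Δ η x < s}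
  have hB : MeasurableSet B := measurableSet_lt (measurable_Δ hη) measurable_const
  have hbound : ∀ᵐ x ∂μ,
      T.indicator (fun x => innerRisk (η x) (fBar 𝒜 (joint μ η) x) - min (η x) (1 - η x)) x ≤
        B.indicator (fun x => |2 * η x - 1|) x := by
    filter_upwards [ae_innerRisk_fBar_eq_min hs hμX hη01 hη 𝒜] with x hx
    refine (indicator_le_self' (fun x _ => sub_nonneg.2 (min_le_innerRisk _ _)) x).trans ?_
    by_cases hxB : x ∈ B
    · rw [indicator_of_mem hxB]
      exact innerRisk_sub_min_le _ _
    · rw [indicator_of_notMem hxB, hx (not_lt.1 hxB), sub_self]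
  have hfBar := 𝒜.measurable_fBar (joint μ η)
  simp only [histRuleP, innerRisk_sgn]
  rw [← integral_indicator hT, ← integral_indicator hB]
  refine integral_mono_ae
    (((integrable_innerRisk hη01 hη hfBar).sub (integrable_min_one_sub hη01 hη)).indicator hT)
    ((Integrable.of_mem_Icc 0 1 (by fun_prop) (ae_of_all _ fun x =>
      ⟨abs_nonneg _, abs_le.2 ⟨by linarith [(hη01 x).1], by linarith [(hη01 x).2]⟩⟩)).indicator hB)
    hbound

end HistogramRule

theorem statement19_general (d : ℕ) (s : ℝ) (hs : s ∈ Set.Ioc (0 : ℝ) 1)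
    (𝒜 : CubePartition d s)
    (μ : Measure (Pt d)) [IsProbabilityMeasure μ] (hμX : μ (cubeX d)ᶜ = 0)
    (η : Pt d → ℝ) (hη : ∀ x, η x ∈ Set.Icc (0 : ℝ) 1) (hmeasη : Measurable η)
    (r : ℝ)
    (β cMNE : ℝ) (hMNE : HasMNE μ η β cMNE) :
    risk (joint μ η) (𝒜.Nr η r) (histRuleP 𝒜 (joint μ η)) -
        bayesRisk (joint μ η) (𝒜.Nr η r) ≤ (cMNE * s) ^ β := by
  have hT := 𝒜.measurableSet_Nr η r
  calc _ ≤ ∫ x in 𝒜.Nr η r,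
          (innerRisk (η x) (histRuleP 𝒜 (joint μ η) x) - min (η x) (1 - η x)) ∂μ :=
        risk_sub_bayesRisk_le hη hmeasη hT (measurable_sgn.comp (𝒜.measurable_fBar _))
    _ ≤ ∫ x in {x | Δ η x < s}, |2 * η x - 1| ∂μ :=
        setIntegral_excess_histRuleP_le hs.1 hμX hη hmeasη 𝒜 hT
    _ ≤ (cMNE * s) ^ β := hMNE s hs.1

theorem statement19 (d : ℕ) (hd : 1 ≤ d) (s : ℝ) (hs : s ∈ Set.Ioc (0 : ℝ) 1)
    (𝒜 : CubePartition d s)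
    (μ : Measure (Pt d)) [IsProbabilityMeasure μ] (hμX : μ (cubeX d)ᶜ = 0)
    (η : Pt d → ℝ) (hη : ∀ x, η x ∈ Set.Icc (0 : ℝ) 1) (hmeasη : Measurable η)
    (r : ℝ) (hr : s / 2 ≤ r)
    (β cMNE : ℝ) (hβ : 0 < β) (hcMNE : 0 < cMNE) (hMNE : HasMNE μ η β cMNE) :
    risk (joint μ η) (𝒜.Nr η r) (histRuleP 𝒜 (joint μ η)) -
        bayesRisk (joint μ η) (𝒜.Nr η r) ≤ (cMNE * s) ^ β :=
  statement19_general d s hs 𝒜 μ hμX η hη hmeasη r β cMNE hMNE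

end RefinedMargin
end
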